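/- arXiv:1512.06142 — 2 statements merged into one kernel-verified Lean document; each statement's English description precedes it below -/
import Mathlib

section
/- With the notation of the LP-duality identity for Φ(A,x,z): if p attains the minimum in the definition Φ(A,x,z) = min_{⟨p,d⟩=1} max_{s∈S(x), a∈A} ⟨p, s−a⟩, and u = Aw, v = Ay maximize the dual expression max{λ > 0 : ∃ w,y ∈ Δ, supp(w) ⊆ supp(x), A(w−y) = λd}, then v ∈ conv(B) where B = argmin_{a∈A} ⟨p,a⟩, u ∈ conv(A \ B), and Φ(A,x,z) = ‖u − v‖. -/
open scoped RealInnerProductSpace BigOperators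

noncomputable def Amul {m n : ℕ} (A : Matrix (Fin m) (Fin n) ℝ) (x : Fin n → ℝ) :
    EuclideanSpace ℝ (Fin m) := WithLp.toLp 2 (fun i => ∑ j, A i j * x j)

noncomputable def col {m n : ℕ} (A : Matrix (Fin m) (Fin n) ℝ) (j : Fin n) :
    EuclideanSpace ℝ (Fin m) := WithLp.toLp 2 (fun i => A i j)

/-- The set of atoms (columns) of `A`. -/
def colSet {m n : ℕ} (A : Matrix (Fin m) (Fin n) ℝ) : Set (EuclideanSpace ℝ (Fin m)) :=
  {a | ∃ j, a = col A j}

noncomputable def maxGap {m n : ℕ} (A : Matrix (Fin m) (Fin n) ℝ) (x : Fin n → ℝ)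
    (p : EuclideanSpace ℝ (Fin m)) : ℝ :=
  sSup {t | ∃ i j : Fin n, 0 < x i ∧ t = ⟪p, col A i - col A j⟫}

noncomputable def phi {m n : ℕ} (A : Matrix (Fin m) (Fin n) ℝ) (x z : Fin n → ℝ) : ℝ :=
  sInf {r | ∃ p : EuclideanSpace ℝ (Fin m),
    ⟪p, (‖Amul A x - Amul A z‖)⁻¹ • (Amul A x - Amul A z)⟫ = 1 ∧ r = maxGap A x p}

variable {m n : ℕ}

lemma inner_Amul (A : Matrix (Fin m) (Fin n) ℝ) (q : EuclideanSpace ℝ (Fin m)) (w : Fin n → ℝ) :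
    ⟪q, Amul A w⟫ = ∑ j, w j * ⟪q, col A j⟫ := by
  have h1 : ⟪q, Amul A w⟫ = ∑ i, q i * ∑ j, A i j * w j := by
    simp [PiLp.inner_apply, RCLike.inner_apply, Amul, mul_comm]
  have hc : ∀ j, ⟪q, col A j⟫ = ∑ i, q i * A i j := by
    intro j; simp [PiLp.inner_apply, RCLike.inner_apply, col, mul_comm]
  rw [h1]; simp_rw [hc, Finset.mul_sum]
  rw [Finset.sum_comm]
  exact Finset.sum_congr rfl fun i _ => Finset.sum_congr rfl fun j _ => by ring

lemma Amul_comb (A : Matrix (Fin m) (Fin n) ℝ) (a b : ℝ) (w w' : Fin n → ℝ) :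
    Amul A (a • w + b • w') = a • Amul A w + b • Amul A w' := by
  ext i
  simp only [Amul, PiLp.add_apply, PiLp.smul_apply, Pi.add_apply, Pi.smul_apply, smul_eq_mul]
  rw [Finset.mul_sum, Finset.mul_sum, ← Finset.sum_add_distrib]
  exact Finset.sum_congr rfl fun j _ => by ring

lemma Amul_single (A : Matrix (Fin m) (Fin n) ℝ) (i : Fin n) :
    Amul A (fun k => if k = i then (1:ℝ) else 0) = col A i := by
  ext r
  simp [Amul, col, mul_ite, Finset.sum_ite_eq']

lemma single_mem_simplex (i : Fin n) :
    (fun k => if k = i then (1:ℝ) else 0) ∈ stdSimplex ℝ (Fin n) := by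
  constructor
  · intro k; by_cases h : k = i <;> simp [h]
  · simp [Finset.sum_ite_eq']

lemma Amul_eq_sum_smul (A : Matrix (Fin m) (Fin n) ℝ) (y : Fin n → ℝ) :
    Amul A y = ∑ j, y j • col A j := by
  ext i
  rw [show (∑ j, y j • col A j) i = ∑ j, (y j • col A j) i from by
    simp]
  simp [Amul, col, mul_comm]

lemma continuous_Amul (A : Matrix (Fin m) (Fin n) ℝ) :
    Continuous (fun w : Fin n → ℝ => Amul A w) := by
  have h : Continuous (fun w : Fin n → ℝ => (fun i => ∑ j, A i j * w j : Fin m → ℝ)) :=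
    continuous_pi fun i => continuous_finset_sum _ fun j _ => continuous_const.mul (continuous_apply j)
  exact (PiLp.continuous_toLp 2 _).comp h

lemma le_maxGap' (A : Matrix (Fin m) (Fin n) ℝ) (x : Fin n → ℝ) (q : EuclideanSpace ℝ (Fin m))
    {i j : Fin n} (hi : 0 < x i) :
    ⟪q, col A i - col A j⟫ ≤ sSup {t | ∃ i j : Fin n, 0 < x i ∧ t = ⟪q, col A i - col A j⟫} := by
  apply le_csSup
  · apply Set.Finite.subset (Set.finite_range (fun ij : Fin n × Fin n => ⟪q, col A ij.1 - col A ij.2⟫)) ?_ |>.bddAbove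
    rintro t ⟨i, j, -, rfl⟩; exact ⟨(i, j), rfl⟩
  · exact ⟨i, j, hi, rfl⟩

/-- If `p` attains the minimum in the definition of `Φ(A,x,z)` and `u = Aw`, `v = Ay`
attain the maximum in the dual expression, then `v ∈ conv(B)` for
`B = argmin_{a ∈ A} ⟨p,a⟩`, `u ∈ conv(A \ B)` and `Φ(A,x,z) = ‖u - v‖`. -/
theorem phi_attained_structure {m n : ℕ} (A : Matrix (Fin m) (Fin n) ℝ) (x z : Fin n → ℝ)
    (hx : x ∈ stdSimplex ℝ (Fin n)) (hz : z ∈ stdSimplex ℝ (Fin n))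
    (hne : Amul A x - Amul A z ≠ 0)
    (d : EuclideanSpace ℝ (Fin m))
    (hd : d = (‖Amul A x - Amul A z‖)⁻¹ • (Amul A x - Amul A z))
    -- `p` attains the minimum in the definition of `Φ(A,x,z)`
    (p : EuclideanSpace ℝ (Fin m)) (hp : ⟪p, d⟫ = 1)
    (hpmin : ∀ q : EuclideanSpace ℝ (Fin m), ⟪q, d⟫ = 1 → maxGap A x p ≤ maxGap A x q)
    -- `u = Aw`, `v = Ay` attain the maximum in the dual expression
    (lam : ℝ) (w y : Fin n → ℝ)
    (hw : w ∈ stdSimplex ℝ (Fin n)) (hy : y ∈ stdSimplex ℝ (Fin n))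
    (hsupp : {i | w i ≠ 0} ⊆ {i | x i ≠ 0})
    (hlam : 0 < lam) (heq : Amul A w - Amul A y = lam • d)
    (hmax : ∀ lam' : ℝ, ∀ w' y' : Fin n → ℝ, w' ∈ stdSimplex ℝ (Fin n) →
      y' ∈ stdSimplex ℝ (Fin n) → {i | w' i ≠ 0} ⊆ {i | x i ≠ 0} → 0 < lam' →
      Amul A w' - Amul A y' = lam' • d → lam' ≤ lam)
    (u v : EuclideanSpace ℝ (Fin m)) (hu : u = Amul A w) (hv : v = Amul A y)
    (B : Set (EuclideanSpace ℝ (Fin m)))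
    (hB : B = {a ∈ colSet A | ∀ a' ∈ colSet A, ⟪p, a⟫ ≤ ⟪p, a'⟫}) :
    v ∈ convexHull ℝ B ∧ u ∈ convexHull ℝ (colSet A \ B) ∧ phi A x z = ‖u - v‖ := by
  -- basic facts
  have hd1 : ‖d‖ = 1 := by
    rw [hd, norm_smul, Real.norm_eq_abs, abs_inv, abs_norm]
    exact inv_mul_cancel₀ (norm_ne_zero_iff.mpr hne)
  have hxpos : ∃ i, 0 < x i := by
    by_contra h
    push_neg at h
    have h0 : ∀ i, x i = 0 := fun i => le_antisymm (h i) (hx.1 i)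
    have := hx.2
    rw [Finset.sum_eq_zero (fun i _ => h0 i)] at this
    norm_num at this
  obtain ⟨i0, hi0⟩ := hxpos
  have hxpos : ∃ i, 0 < x i := ⟨i0, hi0⟩
  have hwx : ∀ i, x i = 0 → w i = 0 := by
    intro i hxi
    by_contra hwi
    exact (hsupp hwi) hxi
  -- weak duality
  have keyweak : ∀ q : EuclideanSpace ℝ (Fin m), ⟪q, d⟫ = 1 → lam ≤ maxGap A x q := by
    intro q hq
    obtain ⟨is, hisT, hiMax⟩ := (Finset.univ.filter fun i => 0 < x i).exists_max_image
      (fun i => ⟪q, col A i⟫) ⟨i0, by simp [hi0]⟩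
    obtain ⟨js, -, hjMin⟩ := Finset.univ.exists_min_image (fun j => ⟪q, col A j⟫)
      ⟨i0, Finset.mem_univ _⟩
    have hisx : 0 < x is := by simpa using hisT
    have hAw : ⟪q, Amul A w⟫ ≤ ⟪q, col A is⟫ := by
      rw [inner_Amul]
      calc ∑ j, w j * ⟪q, col A j⟫ ≤ ∑ j, w j * ⟪q, col A is⟫ := by
            apply Finset.sum_le_sum
            intro j _
            rcases eq_or_ne (w j) 0 with h | h
            · simp [h]
            · have hxj : 0 < x j := (hx.1 j).lt_of_ne' (hsupp h)
              exact mul_le_mul_of_nonneg_left (hiMax j (by simp [hxj])) (hw.1 j)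
        _ = ⟪q, col A is⟫ := by rw [← Finset.sum_mul, hw.2, one_mul]
    have hAy : ⟪q, col A js⟫ ≤ ⟪q, Amul A y⟫ := by
      rw [inner_Amul]
      calc ⟪q, col A js⟫ = ∑ j, y j * ⟪q, col A js⟫ := by rw [← Finset.sum_mul, hy.2, one_mul]
        _ ≤ ∑ j, y j * ⟪q, col A j⟫ := by
            apply Finset.sum_le_sum
            intro j _
            exact mul_le_mul_of_nonneg_left (hjMin j (Finset.mem_univ j)) (hy.1 j)
    have hlam_eq : ⟪q, Amul A w⟫ - ⟪q, Amul A y⟫ = lam := by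
      rw [← inner_sub_right, heq, real_inner_smul_right, hq, mul_one]
    have h1 : ⟪q, col A is - col A js⟫ ≤ maxGap A x q := le_maxGap' A x q hisx
    rw [inner_sub_right] at h1
    linarith
  -- the compact convex feasible set
  set C : Set (EuclideanSpace ℝ (Fin m)) :=
    {c | ∃ w' y' : Fin n → ℝ, w' ∈ stdSimplex ℝ (Fin n) ∧ y' ∈ stdSimplex ℝ (Fin n) ∧
      (∀ i, x i = 0 → w' i = 0) ∧ c = Amul A w' - Amul A y'} with hC
  have hconv : Convex ℝ C := by
    rintro c1 ⟨w1, y1, hw1, hy1, hs1, rfl⟩ c2 ⟨w2, y2, hw2, hy2, hs2, rfl⟩ a b ha hb hab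
    refine ⟨a • w1 + b • w2, a • y1 + b • y2,
      convex_stdSimplex ℝ (Fin n) hw1 hw2 ha hb hab,
      convex_stdSimplex ℝ (Fin n) hy1 hy2 ha hb hab, ?_, ?_⟩
    · intro i hxi
      simp [Pi.add_apply, Pi.smul_apply, hs1 i hxi, hs2 i hxi]
    · rw [Amul_comb, Amul_comb, smul_sub, smul_sub]
      abel
  have hVclosed : IsClosed {w' : Fin n → ℝ | ∀ i, x i = 0 → w' i = 0} := by
    have hset : {w' : Fin n → ℝ | ∀ i, x i = 0 → w' i = 0} =
        ⋂ i, {w' : Fin n → ℝ | x i = 0 → w' i = 0} := by ext; simp [Set.mem_iInter]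
    rw [hset]
    apply isClosed_iInter
    intro i
    by_cases hxi : x i = 0
    · have : {w' : Fin n → ℝ | x i = 0 → w' i = 0} = {w' : Fin n → ℝ | w' i = 0} := by
        ext; simp [hxi]
      rw [this]
      exact isClosed_eq (continuous_apply i) continuous_const
    · have : {w' : Fin n → ℝ | x i = 0 → w' i = 0} = Set.univ := by
        ext; simp [hxi]
      rw [this]; exact isClosed_univ
  have hclosed : IsClosed C := by
    have hK : IsCompact ((stdSimplex ℝ (Fin n) ∩ {w' | ∀ i, x i = 0 → w' i = 0}) ×ˢ
        stdSimplex ℝ (Fin n)) :=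
      ((isCompact_stdSimplex ℝ (Fin n)).inter_right hVclosed).prod (isCompact_stdSimplex ℝ (Fin n))
    have hcont : Continuous (fun wy : (Fin n → ℝ) × (Fin n → ℝ) =>
        Amul A wy.1 - Amul A wy.2) :=
      ((continuous_Amul A).comp continuous_fst).sub ((continuous_Amul A).comp continuous_snd)
    have hCimg : C = (fun wy : (Fin n → ℝ) × (Fin n → ℝ) => Amul A wy.1 - Amul A wy.2) ''
        ((stdSimplex ℝ (Fin n) ∩ {w' | ∀ i, x i = 0 → w' i = 0}) ×ˢ stdSimplex ℝ (Fin n)) := by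
      ext c
      constructor
      · rintro ⟨w', y', h1, h2, h3, rfl⟩
        exact ⟨(w', y'), ⟨⟨h1, h3⟩, h2⟩, rfl⟩
      · rintro ⟨⟨w', y'⟩, ⟨⟨h1, h3⟩, h2⟩, rfl⟩
        exact ⟨w', y', h1, h2, h3, rfl⟩
    rw [hCimg]
    exact (hK.image hcont).isClosed
  have hmemlam : lam • d ∈ C := ⟨w, y, hw, hy, hwx, heq.symm⟩
  -- strong duality : maxGap A x p ≤ lam
  have hstrong : maxGap A x p ≤ lam := by
    apply le_of_forall_pos_le_add
    intro ε hε
    have hnot : (lam + ε) • d ∉ C := by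
      rintro ⟨w', y', hw', hy', hs', hEq⟩
      have hsupp' : {i | w' i ≠ 0} ⊆ {i | x i ≠ 0} := by
        intro i hi hxi
        exact hi (hs' i hxi)
      have := hmax (lam + ε) w' y' hw' hy' hsupp' (by linarith) hEq.symm
      linarith
    obtain ⟨f, s, hfs, hsf⟩ := geometric_hahn_banach_closed_point hconv hclosed hnot
    set q0 := (InnerProductSpace.toDual ℝ (EuclideanSpace ℝ (Fin m))).symm f with hq0
    have hq0app : ∀ c : EuclideanSpace ℝ (Fin m), ⟪q0, c⟫ = f c := fun c =>
      InnerProductSpace.toDual_symm_apply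
    have h1 : lam * ⟪q0, d⟫ < s := by
      have := hfs _ hmemlam
      rwa [← hq0app, real_inner_smul_right] at this
    have h2 : s < (lam + ε) * ⟪q0, d⟫ := by
      have := hsf
      rwa [← hq0app, real_inner_smul_right] at this
    have ht : 0 < ⟪q0, d⟫ := by nlinarith
    set q : EuclideanSpace ℝ (Fin m) := (⟪q0, d⟫)⁻¹ • q0 with hqdef
    have hqd : ⟪q, d⟫ = 1 := by
      rw [hqdef, real_inner_smul_left]
      exact inv_mul_cancel₀ ht.ne'
    have hbound : maxGap A x q ≤ lam + ε := by
      rw [maxGap]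
      refine csSup_le ⟨_, i0, i0, hi0, rfl⟩ ?_
      rintro t ⟨i, j, hi, rfl⟩
      have hmemij : col A i - col A j ∈ C := by
        refine ⟨(fun k => if k = i then (1:ℝ) else 0), (fun k => if k = j then (1:ℝ) else 0),
          single_mem_simplex i, single_mem_simplex j, ?_, by rw [Amul_single, Amul_single]⟩
        intro k hxk
        by_cases hk : k = i
        · subst hk; exact absurd hxk hi.ne'
        · simp [hk]
      have h3 : ⟪q0, col A i - col A j⟫ < s := by rw [hq0app]; exact hfs _ hmemij
      rw [hqdef, real_inner_smul_left, inv_mul_le_iff₀ ht]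
      nlinarith
    linarith [hpmin q hqd]
  have hgap_eq : maxGap A x p = lam := le_antisymm hstrong (keyweak p hp)
  -- complementary slackness with q = p
  obtain ⟨is, hisT, hiMax⟩ := (Finset.univ.filter fun i => 0 < x i).exists_max_image
    (fun i => ⟪p, col A i⟫) ⟨i0, by simp [hi0]⟩
  obtain ⟨js, -, hjMin⟩ := Finset.univ.exists_min_image (fun j => ⟪p, col A j⟫)
    ⟨i0, Finset.mem_univ _⟩
  have hisx : 0 < x is := by simpa using hisT
  set Mp := ⟪p, col A is⟫ with hMp
  set mup := ⟪p, col A js⟫ with hmup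
  have haM : ⟪p, Amul A w⟫ ≤ Mp := by
    rw [inner_Amul]
    calc ∑ j, w j * ⟪p, col A j⟫ ≤ ∑ j, w j * Mp := by
          apply Finset.sum_le_sum
          intro j _
          rcases eq_or_ne (w j) 0 with h | h
          · simp [h]
          · have hxj : 0 < x j := (hx.1 j).lt_of_ne' (hsupp h)
            exact mul_le_mul_of_nonneg_left (hiMax j (by simp [hxj])) (hw.1 j)
      _ = Mp := by rw [← Finset.sum_mul, hw.2, one_mul]
  have hbmu : mup ≤ ⟪p, Amul A y⟫ := by
    rw [inner_Amul]
    calc mup = ∑ j, y j * mup := by rw [← Finset.sum_mul, hy.2, one_mul]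
      _ ≤ ∑ j, y j * ⟪p, col A j⟫ := by
          apply Finset.sum_le_sum
          intro j _
          exact mul_le_mul_of_nonneg_left (hjMin j (Finset.mem_univ j)) (hy.1 j)
  have hab : ⟪p, Amul A w⟫ - ⟪p, Amul A y⟫ = lam := by
    rw [← inner_sub_right, heq, real_inner_smul_right, hp, mul_one]
  have hMm_le : Mp - mup ≤ lam := by
    have h1 : ⟪p, col A is - col A js⟫ ≤ maxGap A x p := le_maxGap' A x p hisx
    rw [inner_sub_right] at h1
    rw [← hgap_eq]
    exact h1
  have haeq : ⟪p, Amul A w⟫ = Mp := by linarith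
  have hbeq : ⟪p, Amul A y⟫ = mup := by linarith
  have hMm : Mp - mup = lam := by linarith
  -- the support facts
  have hysup : ∀ j, y j ≠ 0 → ⟪p, col A j⟫ = mup := by
    intro j hj
    have hsum : ∑ k, y k * (⟪p, col A k⟫ - mup) = 0 := by
      simp_rw [mul_sub]
      rw [Finset.sum_sub_distrib, ← Finset.sum_mul, hy.2, one_mul,
        ← inner_Amul, hbeq, sub_self]
    have h0 := (Finset.sum_eq_zero_iff_of_nonneg (fun k _ =>
      mul_nonneg (hy.1 k) (sub_nonneg.2 (hjMin k (Finset.mem_univ k))))).1 hsum j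
      (Finset.mem_univ j)
    rcases mul_eq_zero.1 h0 with h | h
    · exact absurd h hj
    · linarith [sub_eq_zero.1 h]
  have hwsup : ∀ j, w j ≠ 0 → ⟪p, col A j⟫ = Mp := by
    intro j hj
    have hsum : ∑ k, w k * (Mp - ⟪p, col A k⟫) = 0 := by
      simp_rw [mul_sub]
      rw [Finset.sum_sub_distrib, ← Finset.sum_mul, hw.2, one_mul,
        ← inner_Amul, haeq, sub_self]
    have hterm : ∀ k ∈ Finset.univ, 0 ≤ w k * (Mp - ⟪p, col A k⟫) := by
      intro k _
      rcases eq_or_ne (w k) 0 with h | h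
      · simp [h]
      · have hxk : 0 < x k := (hx.1 k).lt_of_ne' (hsupp h)
        exact mul_nonneg (hw.1 k) (sub_nonneg.2 (hiMax k (by simp [hxk])))
    have h0 := (Finset.sum_eq_zero_iff_of_nonneg hterm).1 hsum j (Finset.mem_univ j)
    rcases mul_eq_zero.1 h0 with h | h
    · exact absurd h hj
    · linarith [sub_eq_zero.1 h]
  -- characterisation of B
  have hmemB : ∀ j : Fin n, ⟪p, col A j⟫ = mup → col A j ∈ B := by
    intro j hj
    rw [hB]
    refine ⟨⟨j, rfl⟩, ?_⟩
    rintro a' ⟨k, rfl⟩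
    rw [hj]
    exact hjMin k (Finset.mem_univ k)
  have hnotB : ∀ a, a ∈ B → ⟪p, a⟫ = mup := by
    intro a ha
    rw [hB] at ha
    obtain ⟨⟨k, rfl⟩, hmin⟩ := ha
    exact le_antisymm (hmin _ ⟨js, rfl⟩) (hjMin k (Finset.mem_univ k))
  -- convex hull memberships
  have hrep : ∀ (c : Fin n → ℝ), c ∈ stdSimplex ℝ (Fin n) →
      ∀ S : Set (EuclideanSpace ℝ (Fin m)), (∀ j, c j ≠ 0 → col A j ∈ S) →
      Amul A c ∈ convexHull ℝ S := by
    intro c hc S hS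
    have ht : ∑ j ∈ Finset.univ.filter (fun j => c j ≠ 0), c j = 1 := by
      rw [Finset.sum_filter_ne_zero]
      exact hc.2
    have hcm := Finset.centerMass_mem_convexHull
      (Finset.univ.filter (fun j => c j ≠ 0)) (w := c)
      (fun j _ => hc.1 j) (by rw [ht]; norm_num)
      (z := col A) (fun j hj => hS j (by simpa using hj))
    have hcm' : (Finset.univ.filter (fun j => c j ≠ 0)).centerMass c (col A) = Amul A c := by
      rw [Finset.centerMass, ht, inv_one, one_smul, Amul_eq_sum_smul]
      apply Finset.sum_subset (Finset.subset_univ _)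
      intro j _ hj
      simp only [Finset.mem_filter, Finset.mem_univ, true_and, not_not] at hj
      simp [hj]
    rwa [hcm'] at hcm
  refine ⟨?_, ?_, ?_⟩
  · rw [hv]
    exact hrep y hy B (fun j hj => hmemB j (hysup j hj))
  · rw [hu]
    refine hrep w hw (colSet A \ B) (fun j hj => ⟨⟨j, rfl⟩, ?_⟩)
    intro hjB
    have h1 := hnotB _ hjB
    have h2 := hwsup j hj
    rw [h1] at h2
    linarith
  · have hnorm : ‖u - v‖ = lam := by
      rw [hu, hv, heq, norm_smul, hd1, Real.norm_eq_abs, abs_of_pos hlam, mul_one]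
    rw [hnorm, phi]
    rw [show ((‖Amul A x - Amul A z‖)⁻¹ • (Amul A x - Amul A z)) = d from hd.symm]
    apply le_antisymm
    · exact csInf_le ⟨lam, by rintro r ⟨q, hq, rfl⟩; exact keyweak q hq⟩
        ⟨p, hp, hgap_eq.symm⟩
    · exact le_csInf ⟨_, p, hp, rfl⟩ (by rintro r ⟨q, hq, rfl⟩; exact keyweak q hq)
end

section
/- Let A ∈ R^{m×n} with at least two distinct columns. The facial distance Φ(A) equals the minimum over pairs u ≠ v in conv(A) of the pyramidal directional width PdirW(A, v−u, u) := min over subsets S ⊆ A with u ∈ conv(S) of max over a ∈ A, s ∈ S of ⟨(v−u)/‖v−u‖, a−s⟩. -/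
open scoped RealInnerProductSpace BigOperators Pointwise

/-- The facial distance `Φ(A) = min_{x,z ∈ Δ, A(x-z) ≠ 0} Φ(A,x,z)`. -/
noncomputable def phiTotal {m n : ℕ} (A : Matrix (Fin m) (Fin n) ℝ) : ℝ :=
  sInf {r | ∃ x ∈ stdSimplex ℝ (Fin n), ∃ z ∈ stdSimplex ℝ (Fin n),
    Amul A x - Amul A z ≠ 0 ∧ r = phi A x z}

/-- Pyramidal directional width `PdirW(A, r, u)` of a set of atoms `A` with respect to a
direction `r` and base point `u`. -/
noncomputable def pdirW {m : ℕ} (A : Set (EuclideanSpace ℝ (Fin m)))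
    (r u : EuclideanSpace ℝ (Fin m)) : ℝ :=
  sInf {t | ∃ S : Set (EuclideanSpace ℝ (Fin m)), S ⊆ A ∧ u ∈ convexHull ℝ S ∧
    t = sSup {c | ∃ a ∈ A, ∃ s ∈ S, c = ⟪(‖r‖)⁻¹ • r, a - s⟫}}

/-! ### Auxiliary lemmas -/

section Aux

variable {m n : ℕ}

lemma Amul_eq_sum (A : Matrix (Fin m) (Fin n) ℝ) (x : Fin n → ℝ) :
    Amul A x = ∑ j, x j • col A j := by
  ext i
  have h : (∑ j, x j • col A j) i = ∑ j, (x j • col A j) i := by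
    simp
  simp [Amul, h, col, mul_comm]

lemma mem_hull_of_simplex (A : Matrix (Fin m) (Fin n) ℝ) {x : Fin n → ℝ}
    (hx : x ∈ stdSimplex ℝ (Fin n)) {s : Set (EuclideanSpace ℝ (Fin m))}
    (hs : ∀ j, x j ≠ 0 → col A j ∈ s) : Amul A x ∈ convexHull ℝ s := by
  classical
  rw [Amul_eq_sum]
  have h1 : ∑ j, x j • col A j = ∑ j ∈ Finset.univ.filter (fun j => x j ≠ 0), x j • col A j := by
    symm
    apply Finset.sum_filter_of_ne
    intro j _ h hxj
    exact h (by rw [hxj, zero_smul])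
  have h2 : ∑ j ∈ Finset.univ.filter (fun j => x j ≠ 0), x j = 1 := by
    rw [Finset.sum_filter_of_ne (fun j _ h => h)]
    exact hx.2
  rw [h1]
  have := Finset.centerMass_mem_convexHull (R := ℝ)
      (Finset.univ.filter (fun j => x j ≠ 0)) (w := x) (z := fun j => col A j)
      (fun i _ => hx.1 i) (by rw [h2]; norm_num)
      (fun i hi => hs i (Finset.mem_filter.1 hi).2)
  rwa [Finset.centerMass_eq_of_sum_1 _ _ h2] at this

lemma exists_simplex_of_mem_hull (A : Matrix (Fin m) (Fin n) ℝ) (j₀ : Fin n)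
    {s : Set (EuclideanSpace ℝ (Fin m))} (hs : s ⊆ colSet A)
    {u : EuclideanSpace ℝ (Fin m)} (hu : u ∈ convexHull ℝ s) :
    ∃ x ∈ stdSimplex ℝ (Fin n), Amul A x = u ∧ ∀ j, x j ≠ 0 → col A j ∈ s := by
  classical
  rw [convexHull_eq] at hu
  obtain ⟨ι, t, w, z, hw0, hw1, hz, hcm⟩ := hu
  have hzc : ∀ i ∈ t, ∃ j, z i = col A j := fun i hi => hs (hz i hi)
  set jf : ι → Fin n := fun i => if h : ∃ j, z i = col A j then h.choose else j₀ with hjf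
  have hjf_eq : ∀ i ∈ t, z i = col A (jf i) := by
    intro i hi
    have h := hzc i hi
    simp only [hjf, dif_pos h]
    exact h.choose_spec
  set x : Fin n → ℝ := fun j => ∑ i ∈ t.filter (fun i => jf i = j), w i with hxdef
  have hx0 : ∀ j, 0 ≤ x j := fun j => Finset.sum_nonneg fun i hi => hw0 i (Finset.mem_filter.1 hi).1
  have hxsum : ∑ j, x j = 1 := by
    rw [hxdef]
    rw [Finset.sum_fiberwise_of_maps_to (fun i _ => Finset.mem_univ (jf i))]
    exact hw1
  refine ⟨x, ⟨hx0, hxsum⟩, ?_, ?_⟩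
  · rw [Amul_eq_sum]
    have h1 : ∀ j : Fin n, x j • col A j = ∑ i ∈ t.filter (fun i => jf i = j), w i • col A j := by
      intro j; rw [hxdef]; exact Finset.sum_smul
    have h2 : ∑ j, x j • col A j = ∑ j, ∑ i ∈ t.filter (fun i => jf i = j), w i • col A (jf i) := by
      refine Finset.sum_congr rfl fun j _ => ?_
      rw [h1 j]
      refine Finset.sum_congr rfl fun i hi => ?_
      rw [(Finset.mem_filter.1 hi).2]
    rw [h2, Finset.sum_fiberwise_of_maps_to (fun i _ => Finset.mem_univ (jf i))]
    have h3 : ∑ i ∈ t, w i • col A (jf i) = ∑ i ∈ t, w i • z i :=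
      Finset.sum_congr rfl fun i hi => by rw [hjf_eq i hi]
    rw [h3, ← Finset.centerMass_eq_of_sum_1 _ _ hw1, hcm]
  · intro j hxj
    have hne : (t.filter (fun i => jf i = j)).Nonempty := by
      by_contra h
      rw [Finset.not_nonempty_iff_eq_empty] at h
      exact hxj (by rw [hxdef]; simp [h])
    obtain ⟨i, hi⟩ := hne
    obtain ⟨hit, hij⟩ := Finset.mem_filter.1 hi
    rw [← hij, ← hjf_eq i hit]
    exact hz i hit

variable {E : Type*} [NormedAddCommGroup E] [InnerProductSpace ℝ E]

lemma inner_unit_self {w : E} (hw : w ≠ 0) : ⟪‖w‖⁻¹ • w, ‖w‖⁻¹ • w⟫ = (1:ℝ) := by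
  rw [real_inner_smul_left, real_inner_smul_right, real_inner_self_eq_norm_mul_norm]
  have : ‖w‖ ≠ 0 := norm_ne_zero_iff.2 hw
  field_simp

lemma norm_unit_one {w : E} (hw : w ≠ 0) : ‖(‖w‖⁻¹ • w)‖ = 1 := by
  rw [norm_smul]
  have : ‖w‖ ≠ 0 := norm_ne_zero_iff.2 hw
  simp [abs_of_nonneg (inv_nonneg.2 (norm_nonneg w))]
  field_simp

lemma unit_smul_pos {w : E} (hw : w ≠ 0) {t : ℝ} (ht : 0 < t) :
    ‖t • w‖⁻¹ • (t • w) = ‖w‖⁻¹ • w := by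
  rw [norm_smul, Real.norm_eq_abs, abs_of_pos ht, mul_inv, smul_smul]
  congr 1
  have hwn : ‖w‖ ≠ 0 := norm_ne_zero_iff.2 hw
  field_simp

lemma unit_sub_unit {x p : E} (hx : x ≠ 0) (hp : p ≠ 0) :
    ‖‖x‖⁻¹ • x - ‖p‖⁻¹ • p‖ ≤ 2 * ‖x - p‖ / ‖x‖ := by
  have hxn : (0:ℝ) < ‖x‖ := norm_pos_iff.2 hx
  have hpn : (0:ℝ) < ‖p‖ := norm_pos_iff.2 hp
  have hdecomp : ‖x‖⁻¹ • x - ‖p‖⁻¹ • p = ‖x‖⁻¹ • (x - p) + (‖x‖⁻¹ - ‖p‖⁻¹) • p := by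
    rw [smul_sub, sub_smul]; abel
  rw [hdecomp]
  have h1 : ‖(‖x‖⁻¹ • (x - p))‖ = ‖x - p‖ / ‖x‖ := by
    rw [norm_smul, Real.norm_eq_abs, abs_of_pos (inv_pos.2 hxn)]; ring
  have h2 : ‖((‖x‖⁻¹ - ‖p‖⁻¹) • p)‖ ≤ ‖x - p‖ / ‖x‖ := by
    rw [norm_smul, Real.norm_eq_abs]
    have heq : ‖x‖⁻¹ - ‖p‖⁻¹ = (‖p‖ - ‖x‖) / (‖x‖ * ‖p‖) := by field_simp
    have habs : |‖x‖⁻¹ - ‖p‖⁻¹| = |‖p‖ - ‖x‖| / (‖x‖ * ‖p‖) := by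
      rw [heq, abs_div, abs_of_pos (mul_pos hxn hpn)]
    rw [habs]
    have hb : |‖p‖ - ‖x‖| ≤ ‖x - p‖ := by
      rw [abs_sub_comm]
      exact abs_norm_sub_norm_le x p
    calc |‖p‖ - ‖x‖| / (‖x‖ * ‖p‖) * ‖p‖ = |‖p‖ - ‖x‖| / ‖x‖ := by field_simp
      _ ≤ ‖x - p‖ / ‖x‖ := (div_le_div_iff_of_pos_right hxn).2 hb
  calc ‖(‖x‖⁻¹ • (x - p)) + ((‖x‖⁻¹ - ‖p‖⁻¹) • p)‖
      ≤ ‖(‖x‖⁻¹ • (x - p))‖ + ‖((‖x‖⁻¹ - ‖p‖⁻¹) • p)‖ := norm_add_le _ _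
    _ ≤ ‖x - p‖ / ‖x‖ + ‖x - p‖ / ‖x‖ := by rw [h1]; exact add_le_add le_rfl h2
    _ = 2 * ‖x - p‖ / ‖x‖ := by ring

lemma maxGapSet_bddAbove (A : Matrix (Fin m) (Fin n) ℝ) (x : Fin n → ℝ)
    (p : EuclideanSpace ℝ (Fin m)) :
    BddAbove {t | ∃ i j : Fin n, 0 < x i ∧ t = ⟪p, col A i - col A j⟫} := by
  apply Set.Finite.bddAbove
  apply Set.Finite.subset
    (Set.finite_range (fun ij : Fin n × Fin n => ⟪p, col A ij.1 - col A ij.2⟫))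
  rintro t ⟨i, j, -, rfl⟩
  exact ⟨(i, j), rfl⟩

lemma exists_pos_of_simplex {x : Fin n → ℝ} (hx : x ∈ stdSimplex ℝ (Fin n)) :
    ∃ i, 0 < x i := by
  by_contra h
  push_neg at h
  have hz : ∀ i, x i = 0 := fun i => le_antisymm (h i) (hx.1 i)
  have h2 := hx.2
  rw [Finset.sum_congr rfl (fun i _ => hz i)] at h2
  simp at h2

lemma zero_mem_maxGapSet (A : Matrix (Fin m) (Fin n) ℝ) {x : Fin n → ℝ}
    (hx : ∃ i, 0 < x i) (p : EuclideanSpace ℝ (Fin m)) :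
    (0:ℝ) ∈ {t | ∃ i j : Fin n, 0 < x i ∧ t = ⟪p, col A i - col A j⟫} := by
  obtain ⟨i, hi⟩ := hx
  exact ⟨i, i, hi, by simp⟩

lemma maxGap_nonneg (A : Matrix (Fin m) (Fin n) ℝ) {x : Fin n → ℝ}
    (hx : ∃ i, 0 < x i) (p : EuclideanSpace ℝ (Fin m)) : 0 ≤ maxGap A x p :=
  le_csSup (maxGapSet_bddAbove A x p) (zero_mem_maxGapSet A hx p)

lemma phi_nonneg (A : Matrix (Fin m) (Fin n) ℝ) {x : Fin n → ℝ}
    (hx : x ∈ stdSimplex ℝ (Fin n)) (z : Fin n → ℝ) : 0 ≤ phi A x z := by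
  apply Real.sInf_nonneg
  rintro r ⟨p, -, rfl⟩
  exact maxGap_nonneg A (exists_pos_of_simplex hx) p

lemma pdirWSet_bddAbove (A : Matrix (Fin m) (Fin n) ℝ) {S : Set (EuclideanSpace ℝ (Fin m))}
    (hS : S ⊆ colSet A) (q : EuclideanSpace ℝ (Fin m)) :
    BddAbove {c | ∃ a ∈ colSet A, ∃ s ∈ S, c = ⟪q, a - s⟫} := by
  apply Set.Finite.bddAbove
  apply Set.Finite.subset
    (Set.finite_range (fun ij : Fin n × Fin n => ⟪q, col A ij.1 - col A ij.2⟫))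
  rintro t ⟨a, ⟨j, rfl⟩, s, hs, rfl⟩
  obtain ⟨j', hj'⟩ := hS hs
  exact ⟨(j, j'), by rw [hj']⟩

lemma sSup_pdirW_nonneg (A : Matrix (Fin m) (Fin n) ℝ) {S : Set (EuclideanSpace ℝ (Fin m))}
    (hS : S ⊆ colSet A) (hSne : S.Nonempty) (q : EuclideanSpace ℝ (Fin m)) :
    0 ≤ sSup {c | ∃ a ∈ colSet A, ∃ s ∈ S, c = ⟪q, a - s⟫} := by
  obtain ⟨s0, hs0⟩ := hSne
  exact le_csSup (pdirWSet_bddAbove A hS q) ⟨s0, hS hs0, s0, hs0, by simp⟩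

lemma pdirW_elem_nonneg (A : Matrix (Fin m) (Fin n) ℝ) (r u : EuclideanSpace ℝ (Fin m)) :
    ∀ t ∈ {t | ∃ S : Set (EuclideanSpace ℝ (Fin m)), S ⊆ colSet A ∧ u ∈ convexHull ℝ S ∧
      t = sSup {c | ∃ a ∈ colSet A, ∃ s ∈ S, c = ⟪(‖r‖)⁻¹ • r, a - s⟫}}, 0 ≤ t := by
  rintro t ⟨S, hS, huS, rfl⟩
  have hSne : S.Nonempty := by
    rcases S.eq_empty_or_nonempty with h | h
    · rw [h, convexHull_empty] at huS
      exact absurd huS (Set.notMem_empty u)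
    · exact h
  exact sSup_pdirW_nonneg A hS hSne _

lemma pdirW_nonneg (A : Matrix (Fin m) (Fin n) ℝ) (r u : EuclideanSpace ℝ (Fin m)) :
    0 ≤ pdirW (colSet A) r u :=
  Real.sInf_nonneg (pdirW_elem_nonneg A r u)

end Aux
section Part1

variable {m n : ℕ}

lemma inner_unit_flip (w y u v : EuclideanSpace ℝ (Fin m)) :
    ⟪‖u - v‖⁻¹ • (u - v), y - w⟫ = ⟪‖v - u‖⁻¹ • (v - u), w - y⟫ := by
  rw [show v - u = -(u - v) by abel, show w - y = -(y - w) by abel, norm_neg,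
    real_inner_smul_left, real_inner_smul_left, inner_neg_neg]

lemma part1 (A : Matrix (Fin m) (Fin n) ℝ)
    (hcols : ∃ j j' : Fin n, col A j ≠ col A j') :
    phiTotal A ≤ sInf {t | ∃ u ∈ convexHull ℝ (colSet A), ∃ v ∈ convexHull ℝ (colSet A),
        u ≠ v ∧ t = pdirW (colSet A) (v - u) u} := by
  classical
  obtain ⟨j₀, j₁, hj01⟩ := hcols
  apply le_csInf
  · exact ⟨_, col A j₀, subset_convexHull ℝ _ ⟨j₀, rfl⟩, col A j₁,
      subset_convexHull ℝ _ ⟨j₁, rfl⟩, hj01, rfl⟩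
  rintro t ⟨u, hu, v, hv, huv, rfl⟩
  rw [pdirW]
  apply le_csInf
  · exact ⟨_, colSet A, subset_rfl, hu, rfl⟩
  rintro tS ⟨S, hSsub, huS, rfl⟩
  obtain ⟨x, hx, hAx, hxsupp⟩ := exists_simplex_of_mem_hull A j₀ hSsub huS
  obtain ⟨z, hz, hAz, -⟩ := exists_simplex_of_mem_hull A j₀ subset_rfl hv
  have hw0 : Amul A x - Amul A z ≠ 0 := by
    rw [hAx, hAz]; exact sub_ne_zero.2 huv
  have hxpos : ∃ i, 0 < x i := exists_pos_of_simplex hx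
  have step1 : phiTotal A ≤ phi A x z := by
    apply csInf_le
    · refine ⟨0, ?_⟩
      rintro r ⟨x', hx', z', hz', hne', rfl⟩
      exact phi_nonneg A hx' z'
    · exact ⟨x, hx, z, hz, hw0, rfl⟩
  have step2 : phi A x z ≤
      maxGap A x (‖Amul A x - Amul A z‖⁻¹ • (Amul A x - Amul A z)) := by
    apply csInf_le
    · refine ⟨0, ?_⟩
      rintro r ⟨p, -, rfl⟩
      exact maxGap_nonneg A hxpos p
    · exact ⟨_, inner_unit_self hw0, rfl⟩
  have step3 : maxGap A x (‖Amul A x - Amul A z‖⁻¹ • (Amul A x - Amul A z)) ≤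
      sSup {c | ∃ a ∈ colSet A, ∃ s ∈ S, c = ⟪(‖v - u‖)⁻¹ • (v - u), a - s⟫} := by
    apply csSup_le
    · obtain ⟨i, hi⟩ := hxpos
      exact ⟨_, i, i, hi, rfl⟩
    rintro b ⟨i, j, hi, rfl⟩
    apply le_csSup (pdirWSet_bddAbove A hSsub _)
    refine ⟨col A j, ⟨j, rfl⟩, col A i, hxsupp i (ne_of_gt hi), ?_⟩
    rw [hAx, hAz]
    exact inner_unit_flip (col A j) (col A i) u v
  linarith

end Part1
section Part2

variable {m n : ℕ}

lemma eVec_mem_simplex (j : Fin n) :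
    (fun k => if k = j then (1:ℝ) else 0) ∈ stdSimplex ℝ (Fin n) := by
  constructor
  · intro k; dsimp only; split <;> norm_num
  · simp

lemma Amul_eVec (A : Matrix (Fin m) (Fin n) ℝ) (j : Fin n) :
    Amul A (fun k => if k = j then (1:ℝ) else 0) = col A j := by
  rw [Amul_eq_sum]
  simp [ite_smul]

set_option maxHeartbeats 2000000 in
lemma part2 (A : Matrix (Fin m) (Fin n) ℝ)
    (hcols : ∃ j j' : Fin n, col A j ≠ col A j') :
    sInf {t | ∃ u ∈ convexHull ℝ (colSet A), ∃ v ∈ convexHull ℝ (colSet A),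
        u ≠ v ∧ t = pdirW (colSet A) (v - u) u} ≤ phiTotal A := by
  classical
  obtain ⟨j₀, j₁, hj01⟩ := hcols
  haveI : Nonempty (Fin n) := ⟨j₀⟩
  have hLne : {r | ∃ x ∈ stdSimplex ℝ (Fin n), ∃ z ∈ stdSimplex ℝ (Fin n),
      Amul A x - Amul A z ≠ 0 ∧ r = phi A x z}.Nonempty := by
    refine ⟨_, (fun k => if k = j₀ then (1:ℝ) else 0), eVec_mem_simplex j₀,
      (fun k => if k = j₁ then (1:ℝ) else 0), eVec_mem_simplex j₁, ?_, rfl⟩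
    rw [Amul_eVec, Amul_eVec]
    exact sub_ne_zero.2 hj01
  rw [phiTotal]
  apply le_csInf hLne
  rintro b ⟨x, hx, z, hz, hw0, rfl⟩
  apply le_of_forall_pos_le_add
  intro ε hε
  -- setup
  set w0 : EuclideanSpace ℝ (Fin m) := Amul A x - Amul A z with hw0def
  set dh : EuclideanSpace ℝ (Fin m) := ‖w0‖⁻¹ • w0 with hdhdef
  set ρ : ℝ := phi A x z + ε/4 with hρdef
  have hφ0 : 0 ≤ phi A x z := phi_nonneg A hx z
  have hρpos : 0 < ρ := by rw [hρdef]; linarith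
  have hphiNe : {r | ∃ p : EuclideanSpace ℝ (Fin m),
      ⟪p, (‖Amul A x - Amul A z‖)⁻¹ • (Amul A x - Amul A z)⟫ = 1 ∧ r = maxGap A x p}.Nonempty :=
    ⟨_, _, inner_unit_self hw0, rfl⟩
  have hphil : phi A x z < ρ := by rw [hρdef]; linarith
  obtain ⟨r₀, ⟨p₀, hp₀d, hr₀eq⟩, hr₀lt⟩ := exists_lt_of_csInf_lt hphiNe hphil
  have hp₀ineq : ∀ i j : Fin n, 0 < x i → ⟪p₀, col A i - col A j⟫ ≤ ρ := by
    intro i j hi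
    have hmem : ⟪p₀, col A i - col A j⟫ ∈
        {t | ∃ i j : Fin n, 0 < x i ∧ t = ⟪p₀, col A i - col A j⟫} := ⟨i, j, hi, rfl⟩
    have := le_csSup (maxGapSet_bddAbove A x p₀) hmem
    rw [← maxGap] at this
    rw [hr₀eq] at hr₀lt
    linarith
  set P : Set (EuclideanSpace ℝ (Fin m)) :=
    {p | ⟪p, dh⟫ = 1 ∧ ∀ i j : Fin n, 0 < x i → ⟪p, col A i - col A j⟫ ≤ ρ} with hPdef
  have hp₀P : p₀ ∈ P := ⟨hp₀d, hp₀ineq⟩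
  have hPclosed : IsClosed P := by
    have h1 : IsClosed {p : EuclideanSpace ℝ (Fin m) | ⟪p, dh⟫ = 1} :=
      isClosed_eq (Continuous.inner continuous_id continuous_const) continuous_const
    have h2 : IsClosed {p : EuclideanSpace ℝ (Fin m) |
        ∀ i j : Fin n, 0 < x i → ⟪p, col A i - col A j⟫ ≤ ρ} := by
      have heq : {p : EuclideanSpace ℝ (Fin m) |
          ∀ i j : Fin n, 0 < x i → ⟪p, col A i - col A j⟫ ≤ ρ}
          = ⋂ i, ⋂ j, {p : EuclideanSpace ℝ (Fin m) | 0 < x i → ⟪p, col A i - col A j⟫ ≤ ρ} := by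
        ext p; simp only [Set.mem_iInter, Set.mem_setOf_eq]
      rw [heq]
      refine isClosed_iInter fun i => isClosed_iInter fun j => ?_
      by_cases hxi : 0 < x i
      · have heq2 : {p : EuclideanSpace ℝ (Fin m) | 0 < x i → ⟪p, col A i - col A j⟫ ≤ ρ}
            = {p : EuclideanSpace ℝ (Fin m) | ⟪p, col A i - col A j⟫ ≤ ρ} := by
          ext p; simp [hxi]
        rw [heq2]
        exact isClosed_le (Continuous.inner continuous_id continuous_const) continuous_const
      · have heq2 : {p : EuclideanSpace ℝ (Fin m) | 0 < x i → ⟪p, col A i - col A j⟫ ≤ ρ}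
            = Set.univ := by
          ext p; simp [hxi]
        rw [heq2]; exact isClosed_univ
    exact h1.inter h2
  -- min-norm point of P
  have hK'c : IsCompact (P ∩ Metric.closedBall 0 ‖p₀‖) :=
    (isCompact_closedBall 0 ‖p₀‖).inter_left hPclosed
  have hp₀K' : p₀ ∈ P ∩ Metric.closedBall 0 ‖p₀‖ :=
    ⟨hp₀P, by simp [Metric.mem_closedBall, dist_zero_right]⟩
  obtain ⟨p, hpK', hpmin⟩ := hK'c.exists_isMinOn ⟨p₀, hp₀K'⟩ continuous_norm.continuousOn
  have hpP : p ∈ P := hpK'.1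
  have hpmin' : ∀ q ∈ P, ‖p‖ ≤ ‖q‖ := by
    intro q hq
    by_cases hball : ‖q‖ ≤ ‖p₀‖
    · exact isMinOn_iff.1 hpmin q ⟨hq, by simp [Metric.mem_closedBall, dist_zero_right, hball]⟩
    · have h1 : ‖p‖ ≤ ‖p₀‖ := isMinOn_iff.1 hpmin p₀ hp₀K'
      linarith [not_le.1 hball]
  have hpd : ⟪p, dh⟫ = 1 := hpP.1
  have hpineq : ∀ i j : Fin n, 0 < x i → ⟪p, col A i - col A j⟫ ≤ ρ := hpP.2
  have hpnorm1 : 1 ≤ ‖p‖ := by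
    have h1 := real_inner_le_norm p dh
    rw [hpd, norm_unit_one hw0, mul_one] at h1
    exact h1
  have hpne : p ≠ 0 := by
    intro h0; rw [h0, norm_zero] at hpnorm1; linarith
  -- min level
  set mval : ℝ := Finset.univ.inf' Finset.univ_nonempty (fun j : Fin n => ⟪p, col A j⟫)
    with hmvaldef
  have hm_le : ∀ j, mval ≤ ⟪p, col A j⟫ := fun j => Finset.inf'_le _ (Finset.mem_univ j)
  obtain ⟨jm, -, hjm⟩ := Finset.exists_mem_eq_inf' Finset.univ_nonempty
    (fun j : Fin n => ⟪p, col A j⟫)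
  have hlow : ∀ i, 0 < x i → ⟪p, col A i⟫ ≤ mval + ρ := by
    intro i hi
    have h1 := hpineq i jm hi
    rw [inner_sub_right] at h1
    have h2 : mval = ⟪p, col A jm⟫ := hjm
    linarith
  -- the low set and cone
  set Sσ : Set (EuclideanSpace ℝ (Fin m)) :=
    {s' | ∃ j : Fin n, s' = col A j ∧ ⟪p, col A j⟫ ≤ mval + ρ} with hSσdef
  have hSσsub : Sσ ⊆ colSet A := by rintro s' ⟨j, hj, -⟩; exact ⟨j, hj⟩
  have hSσm : col A jm ∈ Sσ := ⟨jm, rfl, by rw [← hjm]; linarith⟩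
  set M : Set (EuclideanSpace ℝ (Fin m)) :=
    {y | ∃ uu ∈ convexHull ℝ Sσ, ∃ vv ∈ convexHull ℝ (colSet A), y = uu - vv} with hMdef
  have hMconv : Convex ℝ M := by
    have heq : M = convexHull ℝ Sσ - convexHull ℝ (colSet A) := by
      ext y
      constructor
      · rintro ⟨uu, huu, vv, hvv, rfl⟩
        exact Set.sub_mem_sub huu hvv
      · rintro ⟨uu, huu, vv, hvv, rfl⟩
        exact ⟨uu, huu, vv, hvv, rfl⟩
    rw [heq]
    exact (convex_convexHull ℝ _).sub (convex_convexHull ℝ _)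
  set CM : Set (EuclideanSpace ℝ (Fin m)) :=
    {y | ∃ t : ℝ, 0 ≤ t ∧ ∃ mm ∈ M, y = t • mm} with hCMdef
  have hM0 : (0 : EuclideanSpace ℝ (Fin m)) ∈ M :=
    ⟨col A jm, subset_convexHull ℝ _ hSσm, col A jm, subset_convexHull ℝ _ ⟨jm, rfl⟩, by simp⟩
  have hCM0 : (0 : EuclideanSpace ℝ (Fin m)) ∈ CM := ⟨0, le_rfl, 0, hM0, by simp⟩
  have hCMconv : Convex ℝ CM := by
    rintro y₁ ⟨t₁, ht₁, mm₁, hmm₁, rfl⟩ y₂ ⟨t₂, ht₂, mm₂, hmm₂, rfl⟩ a b ha hb hab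
    by_cases hT : a * t₁ + b * t₂ = 0
    · have h1 : a * t₁ = 0 := by nlinarith [mul_nonneg ha ht₁, mul_nonneg hb ht₂]
      have h2 : b * t₂ = 0 := by nlinarith [mul_nonneg ha ht₁, mul_nonneg hb ht₂]
      refine ⟨0, le_rfl, mm₁, hmm₁, ?_⟩
      rw [smul_smul, smul_smul, h1, h2]
      simp
    · have hTpos : 0 < a * t₁ + b * t₂ :=
        lt_of_le_of_ne (add_nonneg (mul_nonneg ha ht₁) (mul_nonneg hb ht₂)) (Ne.symm hT)
      refine ⟨a * t₁ + b * t₂, le_of_lt hTpos,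
        (a * t₁ / (a * t₁ + b * t₂)) • mm₁ + (b * t₂ / (a * t₁ + b * t₂)) • mm₂, ?_, ?_⟩
      · refine hMconv hmm₁ hmm₂ (div_nonneg (mul_nonneg ha ht₁) hTpos.le)
          (div_nonneg (mul_nonneg hb ht₂) hTpos.le) ?_
        field_simp
      · have e1 : (a * t₁ + b * t₂) * (a * t₁ / (a * t₁ + b * t₂)) = a * t₁ := by field_simp
        have e2 : (a * t₁ + b * t₂) * (b * t₂ / (a * t₁ + b * t₂)) = b * t₂ := by field_simp
        simp only [smul_add, smul_smul]
        rw [e1, e2]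
  -- main claim : p ∈ closure CM
  have hclosure : p ∈ closure CM := by
    by_contra hpc
    obtain ⟨f, c0, hfc, hcp⟩ :=
      geometric_hahn_banach_closed_point hCMconv.closure isClosed_closure hpc
    have hc0pos : 0 < c0 := by
      have h1 := hfc 0 (subset_closure hCM0)
      simpa using h1
    have hfM : ∀ mm ∈ M, f mm ≤ 0 := by
      intro mm hmm
      by_contra hpos
      push_neg at hpos
      have ht : (0:ℝ) ≤ (c0 + 1) / f mm := div_nonneg (by linarith) hpos.le
      have hmem : ((c0 + 1) / f mm) • mm ∈ CM := ⟨_, ht, mm, hmm, rfl⟩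
      have h1 := hfc _ (subset_closure hmem)
      rw [map_smul, smul_eq_mul, div_mul_cancel₀ _ (ne_of_gt hpos)] at h1
      linarith
    set h : EuclideanSpace ℝ (Fin m) := (InnerProductSpace.toDual ℝ _).symm f with hhdef
    have hinner : ∀ y, ⟪h, y⟫ = f y := fun y => InnerProductSpace.toDual_symm_apply
    have hF1 : ∀ j' j : Fin n, ⟪p, col A j'⟫ ≤ mval + ρ → ⟪h, col A j' - col A j⟫ ≤ 0 := by
      intro j' j hj'
      rw [hinner]
      exact hfM _ ⟨col A j', subset_convexHull ℝ _ ⟨j', rfl, hj'⟩,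
        col A j, subset_convexHull ℝ _ ⟨j, rfl⟩, rfl⟩
    have hAxSσ : Amul A x ∈ convexHull ℝ Sσ :=
      mem_hull_of_simplex A hx (fun j hj =>
        ⟨j, rfl, hlow j (lt_of_le_of_ne (hx.1 j) (Ne.symm hj))⟩)
    have hAz' : Amul A z ∈ convexHull ℝ (colSet A) :=
      mem_hull_of_simplex A hz (fun j _ => ⟨j, rfl⟩)
    have hF2 : ⟪h, w0⟫ ≤ 0 := by
      rw [hinner]
      exact hfM _ ⟨_, hAxSσ, _, hAz', rfl⟩
    have hF2' : ⟪h, dh⟫ ≤ 0 := by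
      rw [hdhdef, real_inner_smul_right]
      have hi0 : (0:ℝ) ≤ ‖w0‖⁻¹ := inv_nonneg.2 (norm_nonneg _)
      nlinarith
    have hhp : 0 < ⟪h, p⟫ := by
      rw [hinner]; linarith
    have hhne : h ≠ 0 := by
      intro h0; rw [h0] at hhp; simp at hhp
    set δ : ℝ := -⟪h, dh⟫ with hδdef
    have hδ : 0 ≤ δ := by rw [hδdef]; linarith
    -- choose step size s
    set g : Fin n × Fin n → ℝ := fun ij =>
      if ⟪p, col A ij.1 - col A ij.2⟫ < ρ
      then (ρ - ⟪p, col A ij.1 - col A ij.2⟫) / (|⟪h, col A ij.1 - col A ij.2⟫| + 1)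
      else 1 with hgdef
    have hgpos : ∀ ij, 0 < g ij := by
      intro ij
      rw [hgdef]
      dsimp only
      split
      · rename_i hlt
        have : 0 < ρ - ⟪p, col A ij.1 - col A ij.2⟫ := by linarith
        positivity
      · norm_num
    have hph : 0 < ⟪p, h⟫ := by rw [real_inner_comm]; exact hhp
    have hn2 : (0:ℝ) < ‖h‖ ^ 2 := pow_pos (norm_pos_iff.2 hhne) 2
    set s : ℝ := min (Finset.univ.inf' Finset.univ_nonempty g) (⟪p, h⟫ / ‖h‖ ^ 2) with hsdef
    have hs1 : 0 < s := by
      apply lt_min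
      · rw [Finset.lt_inf'_iff]
        intro ij _
        exact hgpos ij
      · positivity
    have hsg : ∀ ij : Fin n × Fin n, s ≤ g ij := fun ij =>
      le_trans (min_le_left _ _) (Finset.inf'_le _ (Finset.mem_univ ij))
    have hsh : s ≤ ⟪p, h⟫ / ‖h‖ ^ 2 := min_le_right _ _
    -- key estimate
    have hkey : ∀ i j : Fin n, 0 < x i →
        ⟪p - s • h, col A i - col A j⟫ ≤ ρ * (1 + s * δ) := by
      intro i j hi
      rw [inner_sub_left, real_inner_smul_left]
      have hvle : ⟪p, col A i - col A j⟫ ≤ ρ := hpineq i j hi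
      have hilow : ⟪p, col A i⟫ ≤ mval + ρ := hlow i hi
      have hcile : ⟪h, col A i - col A j⟫ ≤ 0 := hF1 i j hilow
      by_cases hcase : ⟪p, col A i - col A j⟫ < ρ
      · have hg1 := hsg (i, j)
        rw [hgdef] at hg1
        dsimp only at hg1
        rw [if_pos hcase] at hg1
        have habs : |⟪h, col A i - col A j⟫| = -⟪h, col A i - col A j⟫ := abs_of_nonpos hcile
        have hpos2 : (0:ℝ) < |⟪h, col A i - col A j⟫| + 1 := by positivity
        have hg2 : s * (|⟪h, col A i - col A j⟫| + 1) ≤ ρ - ⟪p, col A i - col A j⟫ :=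
          (le_div_iff₀ hpos2).1 hg1
        nlinarith [mul_nonneg hs1.le hδ, abs_nonneg ⟪h, col A i - col A j⟫]
      · have hveq : ⟪p, col A i - col A j⟫ = ρ := le_antisymm hvle (not_lt.1 hcase)
        have hexp : ⟪p, col A i - col A j⟫ = ⟪p, col A i⟫ - ⟪p, col A j⟫ := inner_sub_right _ _ _
        have hjlow : ⟪p, col A j⟫ ≤ mval + ρ := by
          have hmlej := hm_le j
          linarith
        have hc2 : ⟪h, col A j - col A i⟫ ≤ 0 := hF1 j i hjlow
        have hflip : ⟪h, col A j - col A i⟫ = -⟪h, col A i - col A j⟫ := by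
          rw [show col A j - col A i = -(col A i - col A j) by abel, inner_neg_right]
        have hceq : ⟪h, col A i - col A j⟫ = 0 := by linarith
        rw [hveq, hceq]
        nlinarith [mul_nonneg hs1.le hδ]
    have hsδpos : (0:ℝ) < 1 + s * δ := by nlinarith [mul_nonneg hs1.le hδ]
    set q : EuclideanSpace ℝ (Fin m) := (1 + s * δ)⁻¹ • (p - s • h) with hqdef
    have hqP : q ∈ P := by
      constructor
      · rw [hqdef, real_inner_smul_left, inner_sub_left, real_inner_smul_left, hpd]
        have hδ2 : ⟪h, dh⟫ = -δ := by rw [hδdef]; ring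
        rw [hδ2]
        field_simp
        ring
      · intro i j hi
        rw [hqdef, real_inner_smul_left]
        have hk := hkey i j hi
        calc (1 + s * δ)⁻¹ * ⟪p - s • h, col A i - col A j⟫
            ≤ (1 + s * δ)⁻¹ * (ρ * (1 + s * δ)) :=
              mul_le_mul_of_nonneg_left hk (le_of_lt (inv_pos.2 hsδpos))
          _ = ρ := by field_simp
    have hqnorm : ‖q‖ < ‖p‖ := by
      have hnq : ‖q‖ ≤ ‖p - s • h‖ := by
        rw [hqdef, norm_smul, Real.norm_eq_abs, abs_of_pos (inv_pos.2 hsδpos)]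
        have hle1 : (1 + s * δ)⁻¹ ≤ 1 := by
          rw [inv_le_one_iff₀]
          right
          nlinarith [mul_nonneg hs1.le hδ]
        nlinarith [norm_nonneg (p - s • h)]
      have hsq : ‖p - s • h‖ ^ 2 < ‖p‖ ^ 2 := by
        rw [norm_sub_sq_real, real_inner_smul_right, norm_smul, Real.norm_eq_abs,
          abs_of_pos hs1, mul_pow]
        have hshh : s * ‖h‖ ^ 2 ≤ ⟪p, h⟫ := (le_div_iff₀ hn2).1 hsh
        nlinarith
      have h2 : ‖q‖ ^ 2 < ‖p‖ ^ 2 :=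
        lt_of_le_of_lt (by nlinarith [norm_nonneg q, norm_nonneg (p - s • h)]) hsq
      nlinarith [norm_nonneg q, norm_nonneg p]
    exact absurd hqnorm (not_lt.2 (hpmin' q hqP))
  -- extract an approximating element of the cone
  obtain ⟨R, hR0, hRb⟩ : ∃ R : ℝ, 0 ≤ R ∧ ∀ j : Fin n, ‖col A j‖ ≤ R := by
    refine ⟨Finset.univ.sup' Finset.univ_nonempty (fun j : Fin n => ‖col A j‖), ?_, ?_⟩
    · exact le_trans (norm_nonneg (col A j₀))
        (Finset.le_sup' (fun j : Fin n => ‖col A j‖) (Finset.mem_univ j₀))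
    · exact fun j => Finset.le_sup' (fun j : Fin n => ‖col A j‖) (Finset.mem_univ j)
  set δ' : ℝ := min (‖p‖ / 2) (ε / (32 * (R + 1))) with hδ'def
  have hpnormpos : (0:ℝ) < ‖p‖ := by linarith
  have hδ'pos : 0 < δ' := lt_min (by positivity) (by positivity)
  obtain ⟨y, hyCM, hydist⟩ := Metric.mem_closure_iff.1 hclosure δ' hδ'pos
  rw [dist_eq_norm] at hydist
  obtain ⟨t, ht, mm, hmm, rfl⟩ := hyCM
  obtain ⟨uu, huu, vv2, hvv2, rfl⟩ := hmm
  have hynz : t • (uu - vv2) ≠ 0 := by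
    intro h0
    rw [h0, sub_zero] at hydist
    have h1 : δ' ≤ ‖p‖ / 2 := min_le_left _ _
    linarith
  have htpos : 0 < t := by
    rcases lt_or_eq_of_le ht with h1 | h1
    · exact h1
    · exfalso; apply hynz; rw [← h1, zero_smul]
  have huvne : uu ≠ vv2 := by
    intro h1
    apply hynz
    rw [h1, sub_self, smul_zero]
  have hsubne : uu - vv2 ≠ 0 := sub_ne_zero.2 huvne
  have huu' : uu ∈ convexHull ℝ (colSet A) := convexHull_mono hSσsub huu
  -- norm estimates
  set y : EuclideanSpace ℝ (Fin m) := t • (uu - vv2) with hydef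
  have hyne : y ≠ 0 := hynz
  have hny : ‖p‖ / 2 < ‖y‖ := by
    have h1 : ‖p‖ - ‖p - y‖ ≤ ‖y‖ := by
      have := norm_sub_norm_le p y
      have h2 : ‖p‖ - ‖y‖ ≤ ‖p - y‖ := le_trans (le_abs_self _) (abs_norm_sub_norm_le p y)
      linarith
    have h2 : δ' ≤ ‖p‖ / 2 := min_le_left _ _
    linarith
  have hunit : ‖(‖y‖⁻¹ • y) - (‖p‖⁻¹ • p)‖ ≤ 4 * δ' := by
    have h1 := unit_sub_unit hyne hpne
    have h2 : ‖y - p‖ < δ' := by rw [norm_sub_rev]; exact hydist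
    have h3 : 2 * ‖y - p‖ / ‖y‖ ≤ 2 * δ' / (‖p‖ / 2) := by
      apply div_le_div₀ (by positivity) (by linarith) (by linarith) (le_of_lt hny)
    have h4 : 2 * δ' / (‖p‖ / 2) = 4 * δ' / ‖p‖ := by ring
    have h5 : 4 * δ' / ‖p‖ ≤ 4 * δ' := by
      rw [div_le_iff₀ hpnormpos]
      nlinarith
    linarith
  have hδ'2 : δ' ≤ ε / (32 * (R + 1)) := min_le_right _ _
  -- final chain
  have hfin : sInf {t' | ∃ u ∈ convexHull ℝ (colSet A), ∃ v ∈ convexHull ℝ (colSet A),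
      u ≠ v ∧ t' = pdirW (colSet A) (v - u) u} ≤ phi A x z + ε := by
    have hc1 : sInf {t' | ∃ u ∈ convexHull ℝ (colSet A), ∃ v ∈ convexHull ℝ (colSet A),
        u ≠ v ∧ t' = pdirW (colSet A) (v - u) u} ≤ pdirW (colSet A) (vv2 - uu) uu := by
      apply csInf_le
      · refine ⟨0, ?_⟩
        rintro t' ⟨u', hu', v', hv', hne', rfl⟩
        exact pdirW_nonneg A _ _
      · exact ⟨uu, huu', vv2, hvv2, huvne, rfl⟩
    have hc2 : pdirW (colSet A) (vv2 - uu) uu ≤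
        sSup {c | ∃ a ∈ colSet A, ∃ s' ∈ Sσ, c = ⟪(‖vv2 - uu‖)⁻¹ • (vv2 - uu), a - s'⟫} := by
      apply csInf_le
      · exact ⟨0, pdirW_elem_nonneg A _ _⟩
      · exact ⟨Sσ, hSσsub, huu, rfl⟩
    have hc3 : sSup {c | ∃ a ∈ colSet A, ∃ s' ∈ Sσ, c = ⟪(‖vv2 - uu‖)⁻¹ • (vv2 - uu), a - s'⟫}
        ≤ phi A x z + ε := by
      apply csSup_le
      · exact ⟨_, col A jm, ⟨jm, rfl⟩, col A jm, hSσm, rfl⟩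
      rintro c ⟨a, ⟨j, rfl⟩, s', hs', rfl⟩
      obtain ⟨j', hj'eq, hj'low⟩ := hs'
      rw [hj'eq]
      -- flip to direction uu - vv2
      have hflip : ⟪(‖vv2 - uu‖)⁻¹ • (vv2 - uu), col A j - col A j'⟫
          = ⟪(‖uu - vv2‖)⁻¹ • (uu - vv2), col A j' - col A j⟫ :=
        inner_unit_flip (col A j') (col A j) vv2 uu
      rw [hflip]
      have hyunit : (‖y‖)⁻¹ • y = (‖uu - vv2‖)⁻¹ • (uu - vv2) := by
        rw [hydef]; exact unit_smul_pos hsubne htpos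
      rw [← hyunit]
      -- decompose
      have hdecomp : ⟪(‖y‖)⁻¹ • y, col A j' - col A j⟫
          = ⟪(‖p‖)⁻¹ • p, col A j' - col A j⟫
            + ⟪(‖y‖⁻¹ • y) - (‖p‖⁻¹ • p), col A j' - col A j⟫ := by
        rw [← inner_add_left]
        congr 1
        abel
      rw [hdecomp]
      have hterm1 : ⟪(‖p‖)⁻¹ • p, col A j' - col A j⟫ ≤ ρ := by
        rw [real_inner_smul_left, inner_sub_right]
        have h1 : ⟪p, col A j'⟫ - ⟪p, col A j⟫ ≤ ρ := by
          have := hm_le j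
          linarith
        have h2 : (0:ℝ) ≤ ‖p‖⁻¹ := inv_nonneg.2 (norm_nonneg _)
        have h3 : ‖p‖⁻¹ ≤ 1 := by
          rw [inv_le_one_iff₀]; right; exact hpnorm1
        nlinarith [mul_nonneg h2 (sub_nonneg.2 h1), mul_nonneg hρpos.le (sub_nonneg.2 h3)]
      have hterm2 : ⟪(‖y‖⁻¹ • y) - (‖p‖⁻¹ • p), col A j' - col A j⟫ ≤ ε / 4 := by
        have h1 := real_inner_le_norm ((‖y‖⁻¹ • y) - (‖p‖⁻¹ • p)) (col A j' - col A j)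
        have h2 : ‖col A j' - col A j‖ ≤ 2 * R := by
          calc ‖col A j' - col A j‖ ≤ ‖col A j'‖ + ‖col A j‖ := norm_sub_le _ _
            _ ≤ 2 * R := by linarith [hRb j, hRb j']
        have h3 : ‖(‖y‖⁻¹ • y) - (‖p‖⁻¹ • p)‖ * ‖col A j' - col A j‖ ≤ (4 * δ') * (2 * R) := by
          apply mul_le_mul hunit h2 (norm_nonneg _) (by linarith)
        have h4 : (4 * δ') * (2 * R) ≤ 8 * δ' * (R + 1) := by nlinarith
        have h5 : 8 * δ' * (R + 1) ≤ ε / 4 := by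
          have h6 : 8 * (R + 1) * δ' ≤ 8 * (R + 1) * (ε / (32 * (R + 1))) := by
            apply mul_le_mul_of_nonneg_left hδ'2 (by positivity)
          have h7 : 8 * (R + 1) * (ε / (32 * (R + 1))) = ε / 4 := by
            field_simp
            ring
          linarith
        linarith
      rw [hρdef] at hterm1
      linarith
    linarith
  linarith

end Part2

/-- `Φ(A)` equals the minimum over pairs `u ≠ v` in `conv(A)` of the pyramidal
directional width `PdirW(A, v - u, u)`. -/
theorem phiTotal_eq_min_pdirW {m n : ℕ} (A : Matrix (Fin m) (Fin n) ℝ)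
    (hcols : ∃ j j' : Fin n, col A j ≠ col A j') :
    phiTotal A =
      sInf {t | ∃ u ∈ convexHull ℝ (colSet A), ∃ v ∈ convexHull ℝ (colSet A),
        u ≠ v ∧ t = pdirW (colSet A) (v - u) u} :=
  le_antisymm (part1 A hcols) (part2 A hcols)
end
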